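/- arXiv:2208.07144 — 8 statements merged into one kernel-verified Lean document; each statement's English description precedes it below -/
import Mathlib

section
/- Let p ∈ ℝ and φ₁, φ₂ ∈ ℝ. Define ς = |−e^{iφ₂} − (1 − e^{iφ₁})(1 − e^{iφ₂})·p|² (squared complex modulus). Then 1 − ς = p·κ, where κ = 4(2p − 1)·sin²(φ₁/2)·(cos φ₂ − 1) + 2·sin φ₁·sin φ₂. -/
/-! With `b = e^{iφ₂}` a unit and `c = (1 - e^{iφ₁})(1 - e^{iφ₂})`, expanding the square gives
`1 - ‖-b - p c‖² = -p (2 Re(b̄ c) + p ‖c‖²)`. Since `b̄ b = 1`, `b̄ c = (b̄ - 1)(1 - e^{iφ₁})`, whose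
real part is `(cos φ₂ - 1)(1 - cos φ₁) - sin φ₁ sin φ₂`, and `‖1 - e^{iθ}‖² = 4 sin²(θ/2) = 2 - 2 cos θ`. -/

open Complex Real ComplexConjugate

lemma Real.two_mul_sin_half_sq (θ : ℝ) : 2 * Real.sin (θ / 2) ^ 2 = 1 - Real.cos θ := by
  rw [Real.sin_sq_eq_half_sub]
  ring_nf

lemma one_sub_norm_neg_sub_mul_ofReal_sq {b : ℂ} (hb : ‖b‖ = 1) (c : ℂ) (p : ℝ) :
    1 - ‖-b - c * p‖ ^ 2 = -p * (2 * (conj b * c).re + p * ‖c‖ ^ 2) := by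
  rw [show -b - c * p = -(b + c * p) by ring, norm_neg, Complex.sq_norm, Complex.normSq_add,
    ← Complex.sq_norm, ← Complex.sq_norm, hb, norm_mul, Complex.norm_real, Real.norm_eq_abs,
    mul_pow, sq_abs]
  simp
  ring

lemma norm_one_sub_exp_I_mul_ofReal_sq (θ : ℝ) :
    ‖1 - exp (I * θ)‖ ^ 2 = 4 * Real.sin (θ / 2) ^ 2 := by
  rw [norm_sub_rev, norm_exp_I_mul_ofReal_sub_one, Real.norm_eq_abs, sq_abs]
  ring

lemma re_conj_exp_mul_one_sub_exp_mul_one_sub_exp (φ₁ φ₂ : ℝ) :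
    (conj (exp (I * φ₂)) * ((1 - exp (I * φ₁)) * (1 - exp (I * φ₂)))).re
      = 2 * Real.sin (φ₁ / 2) ^ 2 * (Real.cos φ₂ - 1) - Real.sin φ₁ * Real.sin φ₂ := by
  have hunit : conj (exp (I * φ₂)) * exp (I * φ₂) = 1 := by
    rw [← Complex.normSq_eq_conj_mul_self, ← Complex.sq_norm, norm_exp_I_mul_ofReal, one_pow,
      ofReal_one]
  rw [Real.two_mul_sin_half_sq, show conj (exp (I * φ₂)) * ((1 - exp (I * φ₁)) * (1 - exp (I * φ₂)))
      = (conj (exp (I * φ₂)) - 1) * (1 - exp (I * φ₁)) by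
    linear_combination (exp (I * φ₁) - 1) * hunit]
  simp [Complex.exp_re, Complex.exp_im]
  ring

theorem stmt_0 (p φ₁ φ₂ : ℝ) :
    1 - ‖(-(Complex.exp (Complex.I * φ₂)) -
        (1 - Complex.exp (Complex.I * φ₁)) * (1 - Complex.exp (Complex.I * φ₂)) * (p : ℂ))‖ ^ 2
      = p * (4 * (2 * p - 1) * Real.sin (φ₁ / 2) ^ 2 * (Real.cos φ₂ - 1)
          + 2 * Real.sin φ₁ * Real.sin φ₂) := by
  rw [one_sub_norm_neg_sub_mul_ofReal_sq (norm_exp_I_mul_ofReal φ₂),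
    re_conj_exp_mul_one_sub_exp_mul_one_sub_exp, norm_mul, mul_pow,
    norm_one_sub_exp_I_mul_ofReal_sq, norm_one_sub_exp_I_mul_ofReal_sq]
  linear_combination -8 * p ^ 2 * Real.sin (φ₁ / 2) ^ 2 * Real.two_mul_sin_half_sq φ₂
end

section
/- Let p ∈ ℝ and φ₁, φ₂ ∈ ℝ. Define ϱ = |(1 − e^{iφ₁} − e^{iφ₂}) − (1 − e^{iφ₁})(1 − e^{iφ₂})·p|². Then 1 − ϱ = (p − 1)·κ, where κ = 4(2p − 1)·sin²(φ₁/2)·(cos φ₂ − 1) + 2·sin φ₁·sin φ₂. -/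
/-!
Write `u = e^{iφ₁}`, `v = e^{iφ₂}` and `w = (1 - u)(1 - v)`. The amplitude equals `-(uv + (p - 1) w)`,
and for unimodular `u`, `v` one has `u · conj (1 - u) = -(1 - u)`, so `uv · conj w = w`. Expanding the
squared norm gives `1 - ϱ = -(p - 1) (2 Re w + (p - 1) |1 - u|² |1 - v|²)`, into which
`|1 - e^{iφ}|² = 2 (1 - cos φ) = 4 sin² (φ / 2)` is substituted.
-/

open Complex Real

open scoped ComplexConjugate

namespace Complex

theorem mul_conj_one_sub_of_norm_eq_one {u : ℂ} (hu : ‖u‖ = 1) : u * conj (1 - u) = -(1 - u) := by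
  have h : u * conj u = 1 := by rw [mul_conj, normSq_eq_norm_sq, hu]; norm_num
  rw [map_sub, map_one, mul_sub, h]
  ring

theorem one_sub_sq_norm_grover_of_norm_eq_one {u v : ℂ} (hu : ‖u‖ = 1) (hv : ‖v‖ = 1) (p : ℝ) :
    1 - ‖(1 - u - v) - (1 - u) * (1 - v) * (p : ℂ)‖ ^ 2
      = -(p - 1) * (2 * ((1 - u) * (1 - v)).re + (p - 1) * (‖1 - u‖ ^ 2 * ‖1 - v‖ ^ 2)) := by
  set w := (1 - u) * (1 - v)
  have hz : (1 - u - v) - w * (p : ℂ) = -(u * v + ((p - 1 : ℝ) : ℂ) * w) := by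
    simp only [w]; push_cast; ring
  have hcross : u * v * conj w = w := by
    calc u * v * conj w = (u * conj (1 - u)) * (v * conj (1 - v)) := by
          simp only [w, map_mul]; ring
      _ = w := by
          rw [mul_conj_one_sub_of_norm_eq_one hu, mul_conj_one_sub_of_norm_eq_one hv]; ring
  rw [hz, norm_neg, Complex.sq_norm, normSq_add, map_mul (conj : ℂ →+* ℂ), conj_ofReal,
    mul_left_comm (u * v), hcross, re_ofReal_mul, normSq_mul, normSq_mul, normSq_mul,
    normSq_ofReal]
  simp only [normSq_eq_norm_sq, hu, hv]
  ring

theorem sq_norm_one_sub_exp_I_mul (φ : ℝ) : ‖1 - exp (I * φ)‖ ^ 2 = 2 * (1 - Real.cos φ) := by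
  rw [mul_comm, exp_mul_I, Complex.sq_norm, normSq_apply]
  simp only [sub_re, sub_im, add_re, add_im, mul_re, mul_im, one_re, one_im, I_re, I_im,
    cos_ofReal_re, cos_ofReal_im, sin_ofReal_re, sin_ofReal_im]
  linear_combination Real.sin_sq_add_cos_sq φ

theorem re_one_sub_exp_I_mul_mul_one_sub_exp_I_mul (φ₁ φ₂ : ℝ) :
    ((1 - exp (I * φ₁)) * (1 - exp (I * φ₂))).re
      = (1 - Real.cos φ₁) * (1 - Real.cos φ₂) - Real.sin φ₁ * Real.sin φ₂ := by
  rw [mul_comm I, mul_comm I, exp_mul_I, exp_mul_I]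
  simp only [mul_re, sub_re, sub_im, add_re, add_im, mul_im, one_re, one_im, I_re, I_im,
    cos_ofReal_re, cos_ofReal_im, sin_ofReal_re, sin_ofReal_im]
  ring

end Complex

theorem stmt_1 (p φ₁ φ₂ : ℝ) :
    1 - ‖(1 - Complex.exp (Complex.I * φ₁) - Complex.exp (Complex.I * φ₂)) -
        (1 - Complex.exp (Complex.I * φ₁)) * (1 - Complex.exp (Complex.I * φ₂)) * (p : ℂ)‖ ^ 2
      = (p - 1) * (4 * (2 * p - 1) * Real.sin (φ₁ / 2) ^ 2 * (Real.cos φ₂ - 1)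
          + 2 * Real.sin φ₁ * Real.sin φ₂) := by
  rw [one_sub_sq_norm_grover_of_norm_eq_one (norm_exp_I_mul_ofReal φ₁)
      (norm_exp_I_mul_ofReal φ₂),
    re_one_sub_exp_I_mul_mul_one_sub_exp_I_mul, sq_norm_one_sub_exp_I_mul,
    sq_norm_one_sub_exp_I_mul, Real.sin_sq_eq_half_sub, mul_div_cancel₀ φ₁ two_ne_zero]
  ring
end

section
/- Let 0 < p < 1 and φ₁, φ₂ ∈ ℝ. With ϱ = |(1 − e^{iφ₁} − e^{iφ₂}) − (1 − e^{iφ₁})(1 − e^{iφ₂})p|² and ς = |−e^{iφ₂} − (1 − e^{iφ₁})(1 − e^{iφ₂})p|², the quantities (1 − ϱ) and (1 − ς) have opposite signs or are both zero; equivalently, (1 − ϱ)·(1 − ς) ≤ 0. -/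
open Complex Real

/-!
The generalized Grover iteration is unitary, so it conserves probability:
`p * ϱ + (1 - p) * ς = 1`. For unit `z` we have `conj z = z⁻¹`, which turns this into a
rational identity in `z₁, z₂, p`. Hence `p * (1 - ϱ) = -(1 - p) * (1 - ς)`, and the two
factors cannot share a strict sign.
-/

theorem weighted_sq_norm_grover_amplitudes_eq_one {z₁ z₂ : ℂ} (h₁ : ‖z₁‖ = 1) (h₂ : ‖z₂‖ = 1)
    (p : ℝ) :
    p * ‖(1 - z₁ - z₂) - (1 - z₁) * (1 - z₂) * (p : ℂ)‖ ^ 2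
      + (1 - p) * ‖-z₂ - (1 - z₁) * (1 - z₂) * (p : ℂ)‖ ^ 2 = 1 := by
  have hz₁ : z₁ ≠ 0 := norm_ne_zero_iff.mp (by rw [h₁]; exact one_ne_zero)
  have hz₂ : z₂ ≠ 0 := norm_ne_zero_iff.mp (by rw [h₂]; exact one_ne_zero)
  apply Complex.ofReal_injective
  push_cast
  simp only [← mul_conj', map_sub, map_mul, map_one, map_neg, conj_ofReal, ← inv_eq_conj h₁,
    ← inv_eq_conj h₂]
  field_simp
  ring

theorem mul_nonpos_of_convex_combination_eq_one {p x y : ℝ} (hp0 : 0 < p) (hp1 : p ≤ 1)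
    (h : p * x + (1 - p) * y = 1) : (1 - x) * (1 - y) ≤ 0 := by
  have hx : p * (1 - x) = -((1 - p) * (1 - y)) := by linarith
  have hprod : p * ((1 - x) * (1 - y)) ≤ 0 := by
    rw [← mul_assoc, hx, neg_mul, mul_assoc, ← sq]
    exact neg_nonpos.mpr (mul_nonneg (sub_nonneg.mpr hp1) (sq_nonneg _))
  exact nonpos_of_mul_nonpos_right hprod hp0

theorem stmt_2 (p φ₁ φ₂ : ℝ) (hp0 : 0 < p) (hp1 : p < 1) :
    (1 - ‖(1 - Complex.exp (Complex.I * φ₁) - Complex.exp (Complex.I * φ₂)) -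
          (1 - Complex.exp (Complex.I * φ₁)) * (1 - Complex.exp (Complex.I * φ₂)) * (p : ℂ)‖ ^ 2)
      * (1 - ‖-(Complex.exp (Complex.I * φ₂)) -
          (1 - Complex.exp (Complex.I * φ₁)) * (1 - Complex.exp (Complex.I * φ₂)) * (p : ℂ)‖ ^ 2)
      ≤ 0 :=
  mul_nonpos_of_convex_combination_eq_one hp0 hp1.le <|
    weighted_sq_norm_grover_amplitudes_eq_one (norm_exp_I_mul_ofReal φ₁)
      (norm_exp_I_mul_ofReal φ₂) p
end

section
/- Let p, φ₁, φ₂ ∈ ℝ with ϱ = |(1 − e^{iφ₁} − e^{iφ₂}) − (1 − e^{iφ₁})(1 − e^{iφ₂})p|² and ς = |−e^{iφ₂} − (1 − e^{iφ₁})(1 − e^{iφ₂})p|². Then p·ϱ + (1 − p)·ς = 1. -/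
open Complex Real

open ComplexConjugate in
theorem norm_sq_grover_weighted_sum_eq_one {a b : ℂ} (ha : ‖a‖ = 1) (hb : ‖b‖ = 1) (p : ℝ) :
    p * ‖1 - a - b - (1 - a) * (1 - b) * p‖ ^ 2 + (1 - p) * ‖-b - (1 - a) * (1 - b) * p‖ ^ 2
      = 1 := by
  have ha0 : a ≠ 0 := by rintro rfl; simp at ha
  have hb0 : b ≠ 0 := by rintro rfl; simp at hb
  apply ofReal_injective
  push_cast
  -- On the unit circle `conj z = z⁻¹`, so the claim becomes an identity of rational functions.
  simp only [← mul_conj', map_sub, map_neg, map_mul, map_one, conj_ofReal,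
    ← inv_eq_conj ha, ← inv_eq_conj hb]
  field_simp
  ring

theorem stmt_3 (p φ₁ φ₂ : ℝ) :
    p * Norm.norm ((1 - Complex.exp (Complex.I * φ₁) - Complex.exp (Complex.I * φ₂)) -
          (1 - Complex.exp (Complex.I * φ₁)) * (1 - Complex.exp (Complex.I * φ₂)) * (p : ℂ)) ^ 2
      + (1 - p) * Norm.norm (-(Complex.exp (Complex.I * φ₂)) -
          (1 - Complex.exp (Complex.I * φ₁)) * (1 - Complex.exp (Complex.I * φ₂)) * (p : ℂ)) ^ 2
      = 1 :=
  norm_sq_grover_weighted_sum_eq_one (norm_exp_I_mul_ofReal φ₁) (norm_exp_I_mul_ofReal φ₂) p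
end

section
/- Fix p with 0 < p < 1 and define ς(φ) = 1 − p·[4(2p − 1)·sin²(φ/2)·(cos φ − 1) + 2·sin²φ]. If φ satisfies sin φ < 0 and cos φ > 1 − 1/(2p), then ς′(φ) > 0, i.e., ς is strictly increasing at φ. -/
open Real

/-! The half-angle formula turns ς(φ) into 1 + 2p(2p - 1)(1 - cos φ)² - 2p sin² φ, whose
derivative factors as -4p sin φ (2p cos φ - 2p + 1). For p > 0 the condition on cos φ is exactly
positivity of the last factor, and sin φ < 0 makes the remaining factor positive. -/

noncomputable def attenuationRatio (p φ : ℝ) : ℝ :=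
  1 - p * (4 * (2 * p - 1) * sin (φ / 2) ^ 2 * (cos φ - 1) + 2 * sin φ ^ 2)

lemma attenuationRatio_eq (p φ : ℝ) :
    attenuationRatio p φ = 1 + 2 * p * (2 * p - 1) * (1 - cos φ) ^ 2 - 2 * p * sin φ ^ 2 := by
  rw [attenuationRatio, sin_sq_eq_half_sub, mul_div_cancel₀ φ two_ne_zero]
  ring

lemma hasDerivAt_attenuationRatio (p φ : ℝ) :
    HasDerivAt (attenuationRatio p) (-4 * p * sin φ * (2 * p * cos φ - 2 * p + 1)) φ := by
  have h : HasDerivAt (fun x => 1 + 2 * p * (2 * p - 1) * (1 - cos x) ^ 2 - 2 * p * sin x ^ 2)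
      (2 * p * (2 * p - 1) * (2 * (1 - cos φ) ^ 1 * -(-sin φ)) - 2 * p * (2 * sin φ ^ 1 * cos φ))
      φ :=
    ((((hasDerivAt_cos φ).const_sub 1).pow 2).const_mul _).const_add 1
      |>.sub (((hasDerivAt_sin φ).pow 2).const_mul _)
  rw [funext (attenuationRatio_eq p)]
  exact h.congr_deriv (by ring)

lemma two_mul_mul_cos_sub_add_one_pos {p φ : ℝ} (hp : 0 < p) (hcos : 1 - 1 / (2 * p) < cos φ) :
    0 < 2 * p * cos φ - 2 * p + 1 := by
  have h := mul_lt_mul_of_pos_left hcos (by positivity : 0 < 2 * p)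
  rw [mul_sub, mul_one_div_cancel (by positivity)] at h
  linarith

theorem stmt_9_general (p φ : ℝ) (hp0 : 0 < p)
    (hsin : Real.sin φ < 0) (hcos : Real.cos φ > 1 - 1 / (2 * p)) :
    deriv (fun φ : ℝ => 1 - p *
        (4 * (2 * p - 1) * Real.sin (φ / 2) ^ 2 * (Real.cos φ - 1) + 2 * Real.sin φ ^ 2)) φ
      > 0 := by
  change 0 < deriv (attenuationRatio p) φ
  rw [(hasDerivAt_attenuationRatio p φ).deriv]
  have hprod := mul_pos (mul_pos hp0 (neg_pos.mpr hsin)) (two_mul_mul_cos_sub_add_one_pos hp0 hcos)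
  linarith

theorem stmt_9 (p φ : ℝ) (hp0 : 0 < p) (hp1 : p < 1)
    (hsin : Real.sin φ < 0) (hcos : Real.cos φ > 1 - 1 / (2 * p)) :
    deriv (fun φ : ℝ => 1 - p *
        (4 * (2 * p - 1) * Real.sin (φ / 2) ^ 2 * (Real.cos φ - 1) + 2 * Real.sin φ ^ 2)) φ
      > 0 :=
  stmt_9_general p φ hp0 hsin hcos
end

section
/- Let p ∈ ℝ with p ≥ 1/4 and p ≤ 1 (so that |1 − 1/(2p)| ≤ 1), and let φ₀ = −arccos(1 − 1/(2p)). Then the phase-matched attenuation ratio satisfies ς(φ₀) = 1 − p·[4(2p − 1)·sin²(φ₀/2)·(cos φ₀ − 1) + 2·sin²φ₀] = 0. -/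
open Real

theorem stmt_11 (p : ℝ) (hp1 : 1 / 4 ≤ p) (hp2 : p ≤ 1) :
    1 - p * (4 * (2 * p - 1) * Real.sin ((-Real.arccos (1 - 1 / (2 * p))) / 2) ^ 2
          * (Real.cos (-Real.arccos (1 - 1 / (2 * p))) - 1)
        + 2 * Real.sin (-Real.arccos (1 - 1 / (2 * p))) ^ 2) = 0 := by
  have hp0 : 0 < p := lt_of_lt_of_le (by norm_num) hp1
  set y : ℝ := 1 - 1 / (2 * p) with hy
  have hy1 : -1 ≤ y := by
    rw [hy]
    have : 1 / (2 * p) ≤ 2 := by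
      rw [div_le_iff₀ (by positivity)]
      linarith
    linarith
  have hy2 : y ≤ 1 := by
    have : 0 ≤ 1 / (2 * p) := by positivity
    rw [hy]; linarith
  have hc : Real.cos (Real.arccos y) = y := Real.cos_arccos hy1 hy2
  have hs2 : Real.sin (Real.arccos y) ^ 2 = 1 - y ^ 2 := by
    rw [Real.sin_arccos, sq_sqrt (by nlinarith)]
  have hh : Real.sin (Real.arccos y / 2) ^ 2 = (1 - y) / 2 := by
    rw [sin_sq, Real.cos_sq, show 2 * (Real.arccos y / 2) = Real.arccos y by ring, hc]
    ring
  rw [Real.cos_neg, neg_div, Real.sin_neg, Real.sin_neg, neg_sq, neg_sq, hc, hs2, hh, hy]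
  field_simp
  ring
end

section
/- Let p ∈ (0, 1] and x ∈ [0, 1] with √x ≥ 1 − 4p. Define W = 1 − (1 − √x)/(2p) and φ = −arccos(W). Then the phase-matched attenuation ratio satisfies ς(φ) = 1 − p·[4(2p − 1)·sin²(φ/2)·(cos φ − 1) + 2·sin²φ] = x. -/
open Real

theorem attenuationRatio_eq_sq (p φ : ℝ) :
    attenuationRatio p φ = (1 - 2 * p * (1 - cos φ)) ^ 2 := by
  have half : sin (φ / 2) ^ 2 = (1 - cos φ) / 2 := by
    rw [sin_sq_eq_half_sub, mul_div_cancel₀ φ two_ne_zero]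
    ring
  rw [attenuationRatio, half, sin_sq]
  ring

theorem stmt_12_general (p x : ℝ) (hp0 : 0 < p) (hx0 : 0 ≤ x) (hx1 : x ≤ 1)
    (hW : Real.sqrt x ≥ 1 - 4 * p) :
    1 - p * (4 * (2 * p - 1)
          * Real.sin ((-Real.arccos (1 - (1 - Real.sqrt x) / (2 * p))) / 2) ^ 2
          * (Real.cos (-Real.arccos (1 - (1 - Real.sqrt x) / (2 * p))) - 1)
        + 2 * Real.sin (-Real.arccos (1 - (1 - Real.sqrt x) / (2 * p))) ^ 2) = x := by
  set W := 1 - (1 - √x) / (2 * p) with hWdef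
  have hp2 : 0 < 2 * p := by linarith
  have hW_le : W ≤ 1 := by
    have : 0 ≤ (1 - √x) / (2 * p) := div_nonneg (by linarith [sqrt_le_one.2 hx1]) hp2.le
    linarith
  have hW_ge : -1 ≤ W := by
    have : (1 - √x) / (2 * p) ≤ 2 := (div_le_iff₀ hp2).2 (by linarith)
    linarith
  have hsqrt : 1 - 2 * p * (1 - W) = √x := by
    rw [hWdef]
    field_simp
    ring
  change attenuationRatio p (-arccos W) = x
  rw [attenuationRatio_eq_sq, cos_neg, cos_arccos hW_ge hW_le, hsqrt, sq_sqrt hx0]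

theorem stmt_12 (p x : ℝ) (hp0 : 0 < p) (hp1 : p ≤ 1) (hx0 : 0 ≤ x) (hx1 : x ≤ 1)
    (hW : Real.sqrt x ≥ 1 - 4 * p) :
    1 - p * (4 * (2 * p - 1)
          * Real.sin ((-Real.arccos (1 - (1 - Real.sqrt x) / (2 * p))) / 2) ^ 2
          * (Real.cos (-Real.arccos (1 - (1 - Real.sqrt x) / (2 * p))) - 1)
        + 2 * Real.sin (-Real.arccos (1 - (1 - Real.sqrt x) / (2 * p))) ^ 2) = x :=
  stmt_12_general p x hp0 hx0 hx1 hW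
end

section
/- Let p ∈ (0, 1) and φ ∈ ℝ, and, with φ₁ = φ₂ = φ, define ϱ = |(1 − 2e^{iφ}) − (1 − e^{iφ})²·p|² and ς = |−e^{iφ} − (1 − e^{iφ})²·p|². If φ satisfies sin φ < 0 and cos φ > 1 − 1/(2p), then ϱ > 1 and ς < 1 whenever κ(φ) = 4(2p − 1)sin²(φ/2)(cos φ − 1) + 2 sin²φ > 0; moreover κ(φ) > 0 holds for all such φ with −π < φ < 0. -/
open Complex Real

theorem stmt_19 (p φ : ℝ) (hp0 : 0 < p) (hp1 : p < 1)
    (hsin : Real.sin φ < 0) (hcos : Real.cos φ > 1 - 1 / (2 * p)) :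
    ((4 * (2 * p - 1) * Real.sin (φ / 2) ^ 2 * (Real.cos φ - 1) + 2 * Real.sin φ ^ 2) > 0 →
      ‖(1 - 2 * Complex.exp (Complex.I * φ)) -
          (1 - Complex.exp (Complex.I * φ)) ^ 2 * (p : ℂ)‖ ^ 2 > 1
      ∧ ‖-(Complex.exp (Complex.I * φ)) -
          (1 - Complex.exp (Complex.I * φ)) ^ 2 * (p : ℂ)‖ ^ 2 < 1)
    ∧ (-π < φ → φ < 0 →
        (4 * (2 * p - 1) * Real.sin (φ / 2) ^ 2 * (Real.cos φ - 1) + 2 * Real.sin φ ^ 2) > 0) := by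
  set c := Real.cos φ with hc
  set s := Real.sin φ with hs
  have hpyth : s ^ 2 + c ^ 2 = 1 := Real.sin_sq_add_cos_sq φ
  have hhalf : Real.sin (φ / 2) ^ 2 = (1 - c) / 2 := by
    have h2 : Real.cos (2 * (φ / 2)) = 2 * Real.cos (φ / 2) ^ 2 - 1 := Real.cos_two_mul _
    have hph : Real.sin (φ / 2) ^ 2 + Real.cos (φ / 2) ^ 2 = 1 := Real.sin_sq_add_cos_sq _
    have h3 : 2 * (φ / 2) = φ := by ring
    rw [h3] at h2
    rw [hc]; linarith
  have hκ : 4 * (2 * p - 1) * Real.sin (φ / 2) ^ 2 * (c - 1) + 2 * s ^ 2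
      = 4 * (1 - c) * (1 - p + p * c) := by
    rw [hhalf]; linear_combination 2 * hpyth
  have he : Complex.exp (Complex.I * φ) = (c : ℂ) + (s : ℂ) * Complex.I := by
    rw [mul_comm, Complex.exp_mul_I]
    rw [hc, hs]
    push_cast [Complex.ofReal_cos, Complex.ofReal_sin]
    ring
  constructor
  · intro hk
    rw [hκ] at hk
    constructor
    · have hA : (1 - 2 * Complex.exp (Complex.I * φ)) -
          (1 - Complex.exp (Complex.I * φ)) ^ 2 * (p : ℂ)
          = (((1 - p) - 2 * (1 - p) * c - p * (c ^ 2 - s ^ 2) : ℝ) : ℂ)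
            + ((-2 * (1 - p) * s - 2 * p * c * s : ℝ) : ℂ) * Complex.I := by
        rw [he]; push_cast
        linear_combination (-(p : ℂ) * (s : ℂ) ^ 2) * Complex.I_sq
      rw [hA, Complex.sq_norm, Complex.normSq_add_mul_I]
      have heq : ((1 - p) - 2 * (1 - p) * c - p * (c ^ 2 - s ^ 2)) ^ 2
          + (-2 * (1 - p) * s - 2 * p * c * s) ^ 2
          = 1 + (1 - p) * (4 * (1 - c) * (1 - p + p * c)) := by
        linear_combination (2 * ((1 - p) - 2 * (1 - p) * c - p * c ^ 2) * p
          + p ^ 2 * (s ^ 2 + 1 - c ^ 2) + 4 * (1 - p + p * c) ^ 2) * hpyth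
      rw [heq]
      nlinarith [mul_pos (by linarith : (0:ℝ) < 1 - p) hk]
    · have hB : -(Complex.exp (Complex.I * φ)) -
          (1 - Complex.exp (Complex.I * φ)) ^ 2 * (p : ℂ)
          = ((-p - (1 - 2 * p) * c - p * (c ^ 2 - s ^ 2) : ℝ) : ℂ)
            + ((-(1 - 2 * p) * s - 2 * p * c * s : ℝ) : ℂ) * Complex.I := by
        rw [he]; push_cast
        linear_combination (-(p : ℂ) * (s : ℂ) ^ 2) * Complex.I_sq
      rw [hB, Complex.sq_norm, Complex.normSq_add_mul_I]
      have heq : (-p - (1 - 2 * p) * c - p * (c ^ 2 - s ^ 2)) ^ 2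
          + (-(1 - 2 * p) * s - 2 * p * c * s) ^ 2
          = 1 - p * (4 * (1 - c) * (1 - p + p * c)) := by
        linear_combination (2 * (-p - (1 - 2 * p) * c - p * c ^ 2) * p
          + p ^ 2 * (s ^ 2 + 1 - c ^ 2) + (1 - 2 * p + 2 * p * c) ^ 2) * hpyth
      rw [heq]
      nlinarith [mul_pos hp0 hk]
  · intro h1 h2
    rw [hκ]
    have hs2 : 0 < s * s := mul_pos_of_neg_of_neg hsin hsin
    have hc1 : c < 1 := by nlinarith [Real.cos_le_one φ, Real.neg_one_le_cos φ]
    have hp2 : p * (1 / (2 * p)) = 1 / 2 := by field_simp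
    have hu : (0:ℝ) < 1 - p + p * c := by nlinarith [mul_pos hp0 (sub_pos.2 hcos)]
    nlinarith [mul_pos (sub_pos.2 hc1) hu]
end
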